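/- Let n ≥ 1 be an integer and define f_{V_n}(v) = sin( 2n · arcsin v )² / ( π n (1 − v²)^{3/2} ) for v ∈ (0,1). Then the second moment satisfies ∫_0^1 v² · f_{V_n}(v) dv = 1 − 1/(4n). -/

import Mathlib

/-!
Substituting `v = cos φ` turns `v ^ 2 f_{V_n}(v) dv` into `D_n(φ) ^ 2 / (π n) dφ` on `[0, π/2]`,
where `D_n(φ) = sin (2 n φ) cot φ = 1 + 2 ∑_{0<m<n} cos (2 m φ) + cos (2 n φ)`. By orthogonality
of the `cos (2 m φ)` on `[0, π/2]`, `∫ D_n ^ 2 = π/2 + (n - 1) π + π/4 = n π - π/4`, and dividing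
by `π n` gives `1 - 1/(4n)`. The integrand is unbounded near `v = 1`, so the substitution is done
through an explicit antiderivative: its derivative is nonnegative, hence integrable.
-/

open Real

/-- The probability density `f_{V_n}(v) = sin(2n arcsin v)² / (πn (1−v²)^{3/2})` of the
time-of-flight speed `V_n` of the cursor prepared in the launch-pad state `|c_n⟩`. -/
noncomputable def launchpadSpeedDensity (n : ℕ) (v : ℝ) : ℝ :=
  Real.sin (2 * n * Real.arcsin v) ^ 2 / (π * n * (1 - v ^ 2) ^ ((3 : ℝ) / 2))

open Finset intervalIntegral Set
open MeasureTheory (volume)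

theorem integral_cos_two_int_mul (k : ℤ) :
    ∫ x in (0 : ℝ)..π / 2, cos (2 * k * x) = if k = 0 then π / 2 else 0 := by
  split_ifs with hk
  · simp [hk]
  · have hk' : (2 * k : ℝ) ≠ 0 := by exact_mod_cast mul_ne_zero two_ne_zero hk
    rw [integral_comp_mul_left cos hk', integral_cos, mul_zero, sin_zero, sub_zero,
      show 2 * (k : ℝ) * (π / 2) = k * π by ring, sin_int_mul_pi, smul_zero]

theorem integral_cos_two_nat_mul_mul_cos (a b : ℕ) :
    ∫ x in (0 : ℝ)..π / 2, cos (2 * a * x) * cos (2 * b * x) =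
      if a = b then (if a = 0 then π / 2 else π / 4) else 0 := by
  have product_to_sum : ∀ x : ℝ, cos (2 * a * x) * cos (2 * b * x) =
      (cos (2 * ((a - b : ℤ) : ℝ) * x) + cos (2 * ((a + b : ℤ) : ℝ) * x)) / 2 := by
    intro x
    have h := two_mul_cos_mul_cos (2 * a * x) (2 * b * x)
    push_cast
    rw [show 2 * a * x - 2 * b * x = 2 * ((a : ℝ) - b) * x by ring,
      show 2 * a * x + 2 * b * x = 2 * ((a : ℝ) + b) * x by ring] at h
    linarith
  have hint : ∀ k : ℤ, IntervalIntegrable (fun x => cos (2 * k * x)) volume 0 (π / 2) :=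
    fun k => (by fun_prop : Continuous fun x : ℝ => cos (2 * k * x)).intervalIntegrable _ _
  simp_rw [product_to_sum]
  rw [integral_div, integral_add (hint _) (hint _), integral_cos_two_int_mul,
    integral_cos_two_int_mul]
  split_ifs <;> first | omega | ring

theorem integral_sum_cos_two_nat_mul_sq (s : Finset ℕ) (c : ℕ → ℝ) :
    ∫ x in (0 : ℝ)..π / 2, (∑ m ∈ s, c m * cos (2 * m * x)) ^ 2 =
      ∑ m ∈ s, c m ^ 2 * if m = 0 then π / 2 else π / 4 := by
  have hcont : ∀ a b : ℕ, Continuous fun x => c a * cos (2 * a * x) * (c b * cos (2 * b * x)) :=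
    fun a b => by fun_prop
  simp_rw [sq, sum_mul_sum]
  rw [integral_finsetSum fun a _ =>
    (continuous_finsetSum _ fun b _ => hcont a b).intervalIntegrable _ _]
  refine sum_congr rfl fun a ha => ?_
  rw [integral_finsetSum fun b _ => (hcont a b).intervalIntegrable _ _]
  simp_rw [mul_mul_mul_comm (c a), integral_const_mul, integral_cos_two_nat_mul_mul_cos]
  simp [ha]

def cotSinCoeff (n m : ℕ) : ℝ := if m = 0 ∨ m = n then 1 else 2

/-- The kernel `D_n(φ) = sin (2 n φ) cot φ`, expanded in cosines. -/
noncomputable def cotSinPoly (n : ℕ) (φ : ℝ) : ℝ :=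
  ∑ m ∈ range (n + 1), cotSinCoeff n m * cos (2 * m * φ)

theorem continuous_cotSinPoly (n : ℕ) : Continuous (cotSinPoly n) := by
  unfold cotSinPoly; fun_prop

theorem cotSinPoly_succ {n : ℕ} (hn : 1 ≤ n) (φ : ℝ) :
    cotSinPoly (n + 1) φ = cotSinPoly n φ + cos (2 * n * φ) + cos (2 * (n + 1) * φ) := by
  have interior : ∀ m ∈ range n, cotSinCoeff (n + 1) m = cotSinCoeff n m := by
    intro m hm
    have := mem_range.mp hm
    rw [cotSinCoeff, cotSinCoeff, if_congr (by omega : m = 0 ∨ m = n + 1 ↔ m = 0 ∨ m = n) rfl rfl]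
  simp only [cotSinPoly, sum_range_succ _ (n + 1), sum_range_succ _ n]
  rw [sum_congr rfl fun m hm => by rw [interior m hm], cotSinCoeff, cotSinCoeff, cotSinCoeff,
    if_neg (by omega), if_pos (by omega), if_pos (by omega)]
  push_cast
  ring

theorem sin_mul_cotSinPoly {n : ℕ} (hn : 1 ≤ n) (φ : ℝ) :
    sin φ * cotSinPoly n φ = cos φ * sin (2 * n * φ) := by
  induction n, hn using Nat.le_induction with
  | base =>
    have h : cotSinPoly 1 φ = 1 + cos (2 * φ) := by simp [cotSinPoly, cotSinCoeff, sum_range_succ]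
    rw [h, Nat.cast_one, mul_one, sin_two_mul, cos_two_mul]
    ring
  | succ n hn ih =>
    rw [cotSinPoly_succ hn, Nat.cast_succ, show 2 * ((n : ℝ) + 1) * φ = 2 * n * φ + 2 * φ by ring,
      sin_add, cos_add, sin_two_mul, cos_two_mul]
    linear_combination ih - 2 * cos φ * sin (2 * n * φ) * sin_sq_add_cos_sq φ

theorem integral_cotSinPoly_sq {n : ℕ} (hn : 1 ≤ n) :
    ∫ φ in (0 : ℝ)..π / 2, cotSinPoly n φ ^ 2 = n * π - π / 4 := by
  obtain ⟨k, rfl⟩ : ∃ k, n = k + 1 := ⟨n - 1, by omega⟩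
  have interior : ∀ m ∈ range k,
      cotSinCoeff (k + 1) (m + 1) ^ 2 * (if m + 1 = 0 then π / 2 else π / 4) = π := by
    intro m hm
    have := mem_range.mp hm
    rw [cotSinCoeff, if_neg (by omega), if_neg (by omega)]
    ring
  unfold cotSinPoly
  rw [integral_sum_cos_two_nat_mul_sq, sum_range_succ, sum_range_succ',
    sum_congr rfl interior]
  simp only [cotSinCoeff, sum_const, card_range, nsmul_eq_mul, true_or, or_true, if_true,
    Nat.succ_ne_zero, if_false]
  push_cast
  ring

theorem sin_sq_two_nat_mul_arccos (n : ℕ) (v : ℝ) :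
    sin (2 * n * arccos v) ^ 2 = sin (2 * n * arcsin v) ^ 2 := by
  rw [arccos_eq_pi_div_two_sub_arcsin, show 2 * n * (π / 2 - arcsin v) = n * π - 2 * n * arcsin v by
    ring, sin_nat_mul_pi_sub, neg_sq, mul_pow, ← pow_mul, mul_comm n, pow_mul, neg_one_sq, one_pow,
    one_mul]

theorem sq_mul_launchpadSpeedDensity {n : ℕ} (hn : 1 ≤ n) {v : ℝ} (hv : v ∈ Ioo (-1 : ℝ) 1) :
    v ^ 2 * launchpadSpeedDensity n v = cotSinPoly n (arccos v) ^ 2 / (π * n * √(1 - v ^ 2)) := by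
  have hpos : 0 < 1 - v ^ 2 := by nlinarith [hv.1, hv.2]
  have hkernel : √(1 - v ^ 2) * cotSinPoly n (arccos v) = v * sin (2 * n * arccos v) := by
    simpa [sin_arccos, cos_arccos hv.1.le hv.2.le] using sin_mul_cotSinPoly hn (arccos v)
  have hrpow : (1 - v ^ 2) ^ ((3 : ℝ) / 2) = (1 - v ^ 2) * √(1 - v ^ 2) := by
    rw [show (3 : ℝ) / 2 = 1 + 1 / 2 by norm_num, rpow_add hpos, rpow_one, sqrt_eq_rpow]
  rw [launchpadSpeedDensity, hrpow, ← sin_sq_two_nat_mul_arccos]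
  field_simp
  rw [← sq_sqrt hpos.le, ← mul_pow, ← mul_pow, hkernel]

noncomputable def secondMomentPrimitive (n : ℕ) (v : ℝ) : ℝ :=
  -(∫ φ in (0 : ℝ)..arccos v, cotSinPoly n φ ^ 2) / (π * n)

theorem continuous_secondMomentPrimitive (n : ℕ) : Continuous (secondMomentPrimitive n) :=
  ((continuous_primitive (μ := volume)
    (fun a b => ((continuous_cotSinPoly n).pow 2).intervalIntegrable a b) 0).comp
      continuous_arccos).neg.div_const _

theorem hasDerivAt_secondMomentPrimitive {n : ℕ} (hn : 1 ≤ n) {v : ℝ} (hv : v ∈ Ioo (-1 : ℝ) 1) :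
    HasDerivAt (secondMomentPrimitive n) (v ^ 2 * launchpadSpeedDensity n v) v := by
  have hsq : Continuous fun φ => cotSinPoly n φ ^ 2 := (continuous_cotSinPoly n).pow 2
  have hF : HasDerivAt (secondMomentPrimitive n)
      (-(cotSinPoly n (arccos v) ^ 2 * -(1 / √(1 - v ^ 2))) / (π * n)) v :=
    (((hsq.integral_hasStrictDerivAt 0 (arccos v)).hasDerivAt.comp v
      (hasDerivAt_arccos hv.1.ne' hv.2.ne)).neg).div_const (π * n)
  rw [sq_mul_launchpadSpeedDensity hn hv]
  convert hF using 1
  field_simp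

theorem secondMomentPrimitive_one (n : ℕ) : secondMomentPrimitive n 1 = 0 := by
  simp [secondMomentPrimitive]

theorem secondMomentPrimitive_zero {n : ℕ} (hn : 1 ≤ n) :
    secondMomentPrimitive n 0 = 1 / (4 * n) - 1 := by
  rw [secondMomentPrimitive, arccos_zero, integral_cotSinPoly_sq hn]
  field_simp
  ring

theorem launchpadSpeedDensity_secondMoment (n : ℕ) (hn : 1 ≤ n) :
    (∫ v in (0:ℝ)..1, v ^ 2 * launchpadSpeedDensity n v) = 1 - 1 / (4 * (n : ℝ)) := by
  have hcont := (continuous_secondMomentPrimitive n).continuousOn (s := Icc 0 1)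
  have hderiv : ∀ v ∈ Ioo (0 : ℝ) 1,
      HasDerivAt (secondMomentPrimitive n) (v ^ 2 * launchpadSpeedDensity n v) v :=
    fun v hv => hasDerivAt_secondMomentPrimitive hn ⟨by linarith [hv.1], hv.2⟩
  have hint : IntervalIntegrable (fun v => v ^ 2 * launchpadSpeedDensity n v) volume 0 1 := by
    refine intervalIntegrable_deriv_of_nonneg (by simpa using hcont) (by simpa using hderiv) ?_
    intro v hv
    simp only [zero_le_one, min_eq_left, max_eq_right] at hv
    rw [sq_mul_launchpadSpeedDensity hn ⟨by linarith [hv.1], hv.2⟩]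
    positivity
  rw [integral_eq_sub_of_hasDerivAt_of_le zero_le_one hcont hderiv hint,
    secondMomentPrimitive_one, secondMomentPrimitive_zero hn]
  ring
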